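/- Let x_j be a continuous, globally bounded, strictly sub-luminal trajectory with advanced light-cone time t⁺(t,x), advanced delay function φ(t,x), and unit normal field n̂(t,x) = (x − x_j(t⁺(t,x)))/φ(t,x) defined where φ > 0. Let (t₀, x₀) satisfy φ(t₀, x₀) > 0 and assume x_j is continuously differentiable on a neighborhood of s₀ = t⁺(t₀, x₀) with ‖x_j′‖ < 1 there. Then the map x ↦ n̂(t₀, x) is differentiable at x₀ and its divergence equals 2/φ(t₀, x₀), i.e. ∇·n̂(t₀, x₀) = 2/φ(t₀, x₀). -/

import Mathlib

/-!
The advanced time `T x = t⁺(t₀, x)` is the root in `s` of `s - ‖x - x_j(s)‖ = t₀`. Sub-luminality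
makes the left side strictly increasing in `s`, so the root depends continuously on `x`; its
`s`-derivative at `s₀ = T x₀` is `1 + ⟪n̂, v⟫ > 0`, where `v = x_j'(s₀)` has `‖v‖ < 1`, so the implicit function theorem gives
`∇T = ⟪n̂, ·⟫ / (1 + ⟪n̂, v⟫)`. The derivative of `y ↦ y / ‖y‖` is `P / φ` with `P` the orthogonal
projection onto `n̂ᗮ`, so `Dn̂ = P ∘ (1 - v ⊗ ∇T) / φ`. Since `∇T` is proportional to `⟪n̂, ·⟫`, which
vanishes on the range of `P`, the trace of `Dn̂` is `tr P / φ = (dim - 1) / φ = 2 / φ`.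
-/

open scoped RealInnerProductSpace
open Filter Topology Module

theorem continuousAt_of_strictMono_of_apply_eq {X α β : Type*} [TopologicalSpace X]
    [LinearOrder α] [TopologicalSpace α] [OrderTopology α]
    [LinearOrder β] [TopologicalSpace β] [OrderTopology β]
    {h : X → α → β} {r : X → α} {c : β} {x₀ : X}
    (hmono : ∀ x, StrictMono (h x)) (hcont : ∀ s, ContinuousAt (h · s) x₀)
    (hr : ∀ x, h x (r x) = c) : ContinuousAt r x₀ := by
  refine tendsto_order.2 ⟨fun a ha => ?_, fun b hb => ?_⟩
  · have : h x₀ a < c := hr x₀ ▸ hmono x₀ ha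
    filter_upwards [(hcont a).eventually_lt_const this] with x hx
    exact (hmono x).lt_iff_lt.1 (hr x ▸ hx)
  · have : c < h x₀ b := hr x₀ ▸ hmono x₀ hb
    filter_upwards [(hcont b).eventually_const_lt this] with x hx
    exact (hmono x).lt_iff_lt.1 (hr x ▸ hx)

section Implicit

variable {𝕜 : Type*} [NontriviallyNormedField 𝕜]
  {E₁ : Type*} [NormedAddCommGroup E₁] [NormedSpace 𝕜 E₁] [CompleteSpace E₁]
  {E₂ : Type*} [NormedAddCommGroup E₂] [NormedSpace 𝕜 E₂] [CompleteSpace E₂]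
  {F : Type*} [NormedAddCommGroup F] [NormedSpace 𝕜 F] [CompleteSpace F]

theorem HasStrictFDerivAt.hasStrictFDerivAt_of_continuousAt_of_apply_eq
    {f : E₁ × E₂ → F} {f' : E₁ × E₂ →L[𝕜] F} {u : E₁ × E₂} (hf : HasStrictFDerivAt f f' u)
    (hf₂ : (f' ∘L .inr 𝕜 E₁ E₂).IsInvertible) {L : E₁ →L[𝕜] E₂}
    (hL : f' ∘L (ContinuousLinearMap.id 𝕜 E₁).prod L = 0) {g : E₁ → E₂}
    (hg : ContinuousAt g u.1) (hgu : g u.1 = u.2) (hfg : ∀ᶠ x in 𝓝 u.1, f (x, g x) = f u) :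
    HasStrictFDerivAt g L u.1 := by
  have hψ : HasStrictFDerivAt (hf.implicitFunctionOfProdDomain hf₂) L u.1 :=
    ((hf.implicitFunctionDataOfProdDomain hf₂).hasStrictFDerivAt_implicitFunction _
      (ContinuousLinearMap.fst_comp_prod _ _) hL).snd
  have hgraph : Tendsto (fun x => (x, g x)) (𝓝 u.1) (𝓝 u) := by
    simpa [hgu] using (continuousAt_id.prodMk hg).tendsto
  refine hψ.congr_of_eventuallyEq ?_
  filter_upwards [hgraph.eventually (hf.eventually_apply_eq_iff_implicitFunctionOfProdDomain hf₂),
    hfg] with x hiff hx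
  exact hiff.1 hx

end Implicit

theorem strictMono_sub_norm_sub {F : Type*} [SeminormedAddCommGroup F] {xj : ℝ → F}
    (hsub : ∀ a b : ℝ, a ≠ b → ‖xj a - xj b‖ < |a - b|) (x : F) :
    StrictMono fun s => s - ‖x - xj s‖ := by
  intro a b hab
  have hlip := hsub a b hab.ne
  rw [abs_of_neg (sub_neg.2 hab)] at hlip
  have := norm_sub_norm_le (x - xj b) (x - xj a)
  simp only [sub_sub_sub_cancel_left] at this
  show a - _ < b - _
  linarith

section InnerProductSpace

variable {E : Type*} [NormedAddCommGroup E] [InnerProductSpace ℝ E]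

theorem hasStrictFDerivAt_norm_of_ne_zero {y : E} (hy : y ≠ 0) :
    HasStrictFDerivAt (‖·‖) (innerSL ℝ (‖y‖⁻¹ • y)) y := by
  have hsq := (hasStrictFDerivAt_norm_sq y).sqrt (pow_ne_zero 2 (norm_ne_zero_iff.2 hy))
  simp only [Real.sqrt_sq (norm_nonneg _)] at hsq
  refine hsq.congr_fderiv ?_
  ext z
  simp [field]

theorem hasFDerivAt_inv_norm_smul {y : E} (hy : y ≠ 0) :
    HasFDerivAt (fun z : E => ‖z‖⁻¹ • z)
      (‖y‖⁻¹ • (ContinuousLinearMap.id ℝ E -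
        (innerSL ℝ (‖y‖⁻¹ • y)).smulRight (‖y‖⁻¹ • y))) y := by
  have hinv : HasFDerivAt (fun z : E => ‖z‖⁻¹) _ y :=
    (hasDerivAt_inv (norm_ne_zero_iff.2 hy)).comp_hasFDerivAt y
      (hasStrictFDerivAt_norm_of_ne_zero hy).hasFDerivAt
  refine (hinv.smul (hasFDerivAt_id y)).congr_fderiv ?_
  ext z
  simp only [add_apply, smul_apply, sub_apply, ContinuousLinearMap.id_apply, id_eq,
    ContinuousLinearMap.smulRight_apply, coe_innerSL_apply]
  module

theorem trace_comp_id_sub_smulRight_innerSL [FiniteDimensional ℝ E] {n : E} (hn : ‖n‖ = 1)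
    (c : ℝ) (v : E) :
    LinearMap.trace ℝ E ((ContinuousLinearMap.id ℝ E - (innerSL ℝ n).smulRight n) ∘L
      (ContinuousLinearMap.id ℝ E - (c • innerSL ℝ n).smulRight v) : E →L[ℝ] E) =
      finrank ℝ E - 1 := by
  have hsplit : (ContinuousLinearMap.id ℝ E - (innerSL ℝ n).smulRight n) ∘L
      (ContinuousLinearMap.id ℝ E - (c • innerSL ℝ n).smulRight v) =
      ContinuousLinearMap.id ℝ E - (innerSL ℝ n).smulRight n -
        (c • innerSL ℝ n).smulRight (v - ⟪n, v⟫ • n) := by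
    ext z
    simp [smul_sub]
  have htrace (ℓ : E →L[ℝ] ℝ) (w : E) :
      LinearMap.trace ℝ E (ℓ.smulRight w : E →L[ℝ] E) = ℓ w :=
    LinearMap.trace_smulRight (ℓ : E →ₗ[ℝ] ℝ) w
  rw [hsplit, ContinuousLinearMap.toLinearMap_sub, ContinuousLinearMap.toLinearMap_sub, map_sub,
    map_sub, ContinuousLinearMap.coe_id, LinearMap.trace_id, htrace, htrace]
  simp [inner_sub_right, real_inner_smul_right, hn]

end InnerProductSpace

theorem EuclideanSpace.sum_apply_single_eq_trace {ι : Type*} [Fintype ι] [DecidableEq ι]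
    (L : EuclideanSpace ℝ ι →L[ℝ] EuclideanSpace ℝ ι) :
    ∑ i, L (EuclideanSpace.single i 1) i =
      LinearMap.trace ℝ _ (L : EuclideanSpace ℝ ι →ₗ[ℝ] EuclideanSpace ℝ ι) := by
  rw [LinearMap.trace_eq_sum_inner _ (EuclideanSpace.basisFun ι ℝ)]
  simp [EuclideanSpace.inner_single_left]

section AdvancedTime

variable {E : Type*} [NormedAddCommGroup E]
  {xj : ℝ → E} (hsub : ∀ a b : ℝ, a ≠ b → ‖xj a - xj b‖ < |a - b|)
  {T : E → ℝ} {t₀ : ℝ} (hT : ∀ x, T x = t₀ + ‖x - xj (T x)‖)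
include hsub hT

theorem continuous_of_eq_add_norm_sub : Continuous T :=
  continuous_iff_continuousAt.2 fun _ =>
    continuousAt_of_strictMono_of_apply_eq (strictMono_sub_norm_sub hsub)
      (fun _ => by fun_prop) (c := t₀) fun x => by linarith [hT x]

variable [InnerProductSpace ℝ E]

theorem hasStrictFDerivAt_of_eq_add_norm_sub [CompleteSpace E] {x₀ v : E}
    (hy : x₀ - xj (T x₀) ≠ 0) (hv : HasStrictDerivAt xj v (T x₀)) (hv1 : ‖v‖ < 1) :
    HasStrictFDerivAt T ((1 + ⟪‖x₀ - xj (T x₀)‖⁻¹ • (x₀ - xj (T x₀)), v⟫)⁻¹ •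
      innerSL ℝ (‖x₀ - xj (T x₀)‖⁻¹ • (x₀ - xj (T x₀)))) x₀ := by
  set n := ‖x₀ - xj (T x₀)‖⁻¹ • (x₀ - xj (T x₀))
  have hα : 0 < 1 + ⟪n, v⟫ := by
    have hn : ‖n‖ = 1 := by simpa using norm_smul_inv_norm (𝕜 := ℝ) hy
    have := abs_real_inner_le_norm n v
    rw [hn, one_mul] at this
    linarith [neg_abs_le ⟪n, v⟫]
  have hf : HasStrictFDerivAt (fun p : E × ℝ => p.2 - ‖p.1 - xj p.2‖)
      (.snd ℝ E ℝ - innerSL ℝ n ∘L (.fst ℝ E ℝ - (1 : ℝ →L[ℝ] ℝ).smulRight v ∘L .snd ℝ E ℝ))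
      (x₀, T x₀) :=
    hasStrictFDerivAt_snd.sub ((hasStrictFDerivAt_norm_of_ne_zero hy).comp (x₀, T x₀)
      (hasStrictFDerivAt_fst.sub (hv.hasStrictFDerivAt.comp (x₀, T x₀) hasStrictFDerivAt_snd)))
  refine hf.hasStrictFDerivAt_of_continuousAt_of_apply_eq ?_ ?_
    (continuous_of_eq_add_norm_sub hsub hT).continuousAt rfl
    (Eventually.of_forall fun x => by dsimp only; linarith [hT x, hT x₀])
  · refine .of_inverse (g := (1 + ⟪n, v⟫)⁻¹ • ContinuousLinearMap.id ℝ ℝ) ?_ ?_ <;>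
    · ext
      simp [field]
  · ext z
    simp [field]

theorem trace_fderiv_inv_norm_smul_sub_of_eq_add_norm_sub [FiniteDimensional ℝ E] {x₀ v : E}
    (hy : x₀ - xj (T x₀) ≠ 0) (hv : HasStrictDerivAt xj v (T x₀)) (hv1 : ‖v‖ < 1) :
    DifferentiableAt ℝ (fun x => ‖x - xj (T x)‖⁻¹ • (x - xj (T x))) x₀ ∧
      LinearMap.trace ℝ E (fderiv ℝ (fun x => ‖x - xj (T x)‖⁻¹ • (x - xj (T x))) x₀ : E →L[ℝ] E) =
        (finrank ℝ E - 1) / ‖x₀ - xj (T x₀)‖ := by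
  have hT' := (hasStrictFDerivAt_of_eq_add_norm_sub hsub hT hy hv hv1).hasFDerivAt
  have hY : HasFDerivAt (fun x => x - xj (T x)) _ x₀ :=
    (hasFDerivAt_id x₀).sub (hv.hasStrictFDerivAt.hasFDerivAt.comp x₀ hT')
  have hN : HasFDerivAt (fun x => ‖x - xj (T x)‖⁻¹ • (x - xj (T x))) _ x₀ :=
    (hasFDerivAt_inv_norm_smul hy).comp (g := fun z : E => ‖z‖⁻¹ • z) x₀ hY
  refine ⟨hN.differentiableAt, ?_⟩
  rw [hN.fderiv, ContinuousLinearMap.smul_comp, ContinuousLinearMap.toLinearMap_smul, map_smul,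
    ContinuousLinearMap.toSpanSingleton_comp,
    trace_comp_id_sub_smulRight_innerSL (by simpa using norm_smul_inv_norm (𝕜 := ℝ) hy),
    smul_eq_mul, inv_mul_eq_div]

end AdvancedTime

theorem stmt_4_general (xj : ℝ → EuclideanSpace ℝ (Fin 3))
    (hsub : ∀ a b : ℝ, a ≠ b → ‖xj a - xj b‖ < |a - b|)
    (tplus : ℝ → EuclideanSpace ℝ (Fin 3) → ℝ)
    (htp : ∀ t x, tplus t x = t + ‖x - xj (tplus t x)‖)
    (t₀ : ℝ) (x₀ : EuclideanSpace ℝ (Fin 3))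
    (hpos : 0 < ‖x₀ - xj (tplus t₀ x₀)‖)
    (v' : ℝ → EuclideanSpace ℝ (Fin 3)) (U : Set ℝ)
    (hU : U ∈ nhds (tplus t₀ x₀))
    (hderiv : ∀ s ∈ U, HasDerivAt xj (v' s) s)
    (hcv : ContinuousOn v' U)
    (hlum : ∀ s ∈ U, ‖v' s‖ < 1) :
    DifferentiableAt ℝ
        (fun x : EuclideanSpace ℝ (Fin 3) =>
          ‖x - xj (tplus t₀ x)‖⁻¹ • (x - xj (tplus t₀ x))) x₀ ∧
    ∑ i : Fin 3,
        (fderiv ℝ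
            (fun x : EuclideanSpace ℝ (Fin 3) =>
              ‖x - xj (tplus t₀ x)‖⁻¹ • (x - xj (tplus t₀ x))) x₀
          (EuclideanSpace.single i 1)) i
      = 2 / ‖x₀ - xj (tplus t₀ x₀)‖ := by
  have hv : HasStrictDerivAt xj (v' (tplus t₀ x₀)) (tplus t₀ x₀) :=
    hasStrictDerivAt_of_hasDerivAt_of_continuousAt (eventually_of_mem hU hderiv)
      (hcv.continuousAt hU)
  obtain ⟨hdiff, htrace⟩ := trace_fderiv_inv_norm_smul_sub_of_eq_add_norm_sub hsub (htp t₀)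
    (norm_pos_iff.1 hpos) hv (hlum _ (mem_of_mem_nhds hU))
  refine ⟨hdiff, ?_⟩
  rw [EuclideanSpace.sum_apply_single_eq_trace, htrace, finrank_euclideanSpace_fin]
  norm_num

/-- the divergence of the unit normal field of the advanced light cone
equals `2/φ`. -/
theorem stmt_4 (xj : ℝ → EuclideanSpace ℝ (Fin 3))
    (hcont : Continuous xj)
    (hbdd : Bornology.IsBounded (Set.range xj))
    (hsub : ∀ a b : ℝ, a ≠ b → ‖xj a - xj b‖ < |a - b|)
    (tplus : ℝ → EuclideanSpace ℝ (Fin 3) → ℝ)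
    (htp : ∀ t x, tplus t x = t + ‖x - xj (tplus t x)‖)
    (t₀ : ℝ) (x₀ : EuclideanSpace ℝ (Fin 3))
    (hpos : 0 < ‖x₀ - xj (tplus t₀ x₀)‖)
    (v' : ℝ → EuclideanSpace ℝ (Fin 3)) (U : Set ℝ)
    (hU : U ∈ nhds (tplus t₀ x₀))
    (hderiv : ∀ s ∈ U, HasDerivAt xj (v' s) s)
    (hcv : ContinuousOn v' U)
    (hlum : ∀ s ∈ U, ‖v' s‖ < 1) :
    DifferentiableAt ℝ
        (fun x : EuclideanSpace ℝ (Fin 3) =>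
          ‖x - xj (tplus t₀ x)‖⁻¹ • (x - xj (tplus t₀ x))) x₀ ∧
    ∑ i : Fin 3,
        (fderiv ℝ
            (fun x : EuclideanSpace ℝ (Fin 3) =>
              ‖x - xj (tplus t₀ x)‖⁻¹ • (x - xj (tplus t₀ x))) x₀
          (EuclideanSpace.single i 1)) i
      = 2 / ‖x₀ - xj (tplus t₀ x₀)‖ :=
  stmt_4_general xj hsub tplus htp t₀ x₀ hpos v' U hU hderiv hcv hlum
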